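/- arXiv:1702.03870 — 4 statements merged into one kernel-verified Lean document; each statement's English description precedes it below -/
import Mathlib

section
/- Let (σ,ω) be locally finite positive Borel measures on ℝ^m × ℝ^n, 1<p,q<∞, 0<α≤m, 0<β≤n. Then the two-tailed Muckenhoupt characteristic satisfies Â_{p,q}(σ,ω) ≤ 𝓝_{p,q}(σ,ω), where 𝓝 is the best constant in the norm inequality (∬ I_{α,β}(fσ)^q dω)^{1/q} ≤ 𝓝 (∬ f^p dσ)^{1/p} for all f ≥ 0. -/
open MeasureTheory ENNReal

noncomputable section

abbrev E (m : ℕ) := EuclideanSpace ℝ (Fin m)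

/-- The product fractional integral kernel in `ℝ≥0∞`. -/
noncomputable def prodKernel (m n : ℕ) (α β : ℝ) (z z' : E m × E n) : ℝ≥0∞ :=
  (ENNReal.ofReal ‖z.1 - z'.1‖) ^ (α - (m : ℝ)) * (ENNReal.ofReal ‖z.2 - z'.2‖) ^ (β - (n : ℝ))

/-- The two-parameter tail `ŝ_{I×J}` of the rectangle with centers `cI, cJ` and cube side
lengths `s = |I|^{1/m}`, `t = |J|^{1/n}`. -/
noncomputable def shat (m n : ℕ) (α β : ℝ) (cI : E m) (cJ : E n) (s t : ℝ)
    (z : E m × E n) : ℝ≥0∞ :=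
  ENNReal.ofReal
    ((1 + ‖z.1 - cI‖ / s) ^ (α - (m : ℝ)) * (1 + ‖z.2 - cJ‖ / t) ^ (β - (n : ℝ)))

/-- One-variable tail factor comparison in `ℝ≥0∞`. -/
lemma factor_le {e s d a b : ℝ} (he : e ≤ 0) (hs : 0 < s) (hd : 0 ≤ d)
    (ha : 0 ≤ a) (hb : 0 ≤ b) (h : d ≤ s * (1 + a) * (1 + b)) :
    ENNReal.ofReal (s ^ e) * ENNReal.ofReal ((1 + a) ^ e) * ENNReal.ofReal ((1 + b) ^ e)
      ≤ (ENNReal.ofReal d) ^ e := by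
  have h1a : (0:ℝ) < 1 + a := by linarith
  have h1b : (0:ℝ) < 1 + b := by linarith
  rcases eq_or_lt_of_le he with he0 | he0
  · subst he0
    simp [Real.rpow_zero]
  rcases eq_or_lt_of_le hd with hd0 | hd0
  · rw [← hd0]
    simp [ENNReal.zero_rpow_of_neg he0]
  · rw [ENNReal.ofReal_rpow_of_pos hd0,
      ← ENNReal.ofReal_mul (Real.rpow_nonneg hs.le _),
      ← ENNReal.ofReal_mul (mul_nonneg (Real.rpow_nonneg hs.le _) (Real.rpow_nonneg h1a.le _))]
    apply ENNReal.ofReal_le_ofReal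
    calc s ^ e * (1 + a) ^ e * (1 + b) ^ e
        = (s * (1 + a) * (1 + b)) ^ e := by
          rw [Real.mul_rpow (mul_nonneg hs.le h1a.le) h1b.le, Real.mul_rpow hs.le h1a.le]
      _ ≤ d ^ e := Real.rpow_le_rpow_of_nonpos hd0 h he

lemma one_add_div_pos {c x : ℝ} (hc : 0 < c) (hx : 0 ≤ x) : (0:ℝ) < 1 + x / c := by
  have : 0 ≤ x / c := div_nonneg hx hc.le
  linarith

lemma shat_pos {m n : ℕ} {α β : ℝ} {cI : E m} {cJ : E n} {s t : ℝ}
    (hs : 0 < s) (ht : 0 < t) (z : E m × E n) : 0 < shat m n α β cI cJ s t z := by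
  unfold shat
  apply ENNReal.ofReal_pos.mpr
  exact mul_pos (Real.rpow_pos_of_pos (one_add_div_pos hs (norm_nonneg _)) _)
    (Real.rpow_pos_of_pos (one_add_div_pos ht (norm_nonneg _)) _)

lemma shat_ne_top {m n : ℕ} {α β : ℝ} {cI : E m} {cJ : E n} {s t : ℝ}
    (z : E m × E n) : shat m n α β cI cJ s t z ≠ ⊤ := ENNReal.ofReal_ne_top

lemma shat_le_one {m n : ℕ} {α β : ℝ} (hαm : α ≤ m) (hβn : β ≤ n)
    {cI : E m} {cJ : E n} {s t : ℝ} (hs : 0 < s) (ht : 0 < t) (z : E m × E n) :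
    shat m n α β cI cJ s t z ≤ 1 := by
  unfold shat
  rw [show (1 : ℝ≥0∞) = ENNReal.ofReal 1 by simp]
  apply ENNReal.ofReal_le_ofReal
  have h1 : (1 + ‖z.1 - cI‖ / s) ^ (α - (m:ℝ)) ≤ 1 :=
    Real.rpow_le_one_of_one_le_of_nonpos
      (by have := div_nonneg (norm_nonneg (z.1 - cI)) hs.le; linarith) (by linarith)
  have h2 : (1 + ‖z.2 - cJ‖ / t) ^ (β - (n:ℝ)) ≤ 1 :=
    Real.rpow_le_one_of_one_le_of_nonpos
      (by have := div_nonneg (norm_nonneg (z.2 - cJ)) ht.le; linarith) (by linarith)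
  calc (1 + ‖z.1 - cI‖ / s) ^ (α - (m:ℝ)) * (1 + ‖z.2 - cJ‖ / t) ^ (β - (n:ℝ))
      ≤ 1 * 1 := mul_le_mul h1 h2 (Real.rpow_nonneg (one_add_div_pos ht (norm_nonneg _)).le _)
        (by norm_num)
    _ = 1 := by norm_num

lemma measurable_shat {m n : ℕ} {α β : ℝ} {cI : E m} {cJ : E n} {s t : ℝ} :
    Measurable (shat m n α β cI cJ s t) := by
  unfold shat
  apply Measurable.ennreal_ofReal
  have h1 : Measurable fun z : E m × E n => (1 + ‖z.1 - cI‖ / s) ^ (α - (m:ℝ)) :=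
    (measurable_const.add ((measurable_fst.sub measurable_const).norm.div
      measurable_const)).pow measurable_const
  have h2 : Measurable fun z : E m × E n => (1 + ‖z.2 - cJ‖ / t) ^ (β - (n:ℝ)) :=
    (measurable_const.add ((measurable_snd.sub measurable_const).norm.div
      measurable_const)).pow measurable_const
  exact h1.mul h2

/-- Pointwise kernel lower bound. -/
lemma kernel_lower {m n : ℕ} {α β : ℝ} (hαm : α ≤ m) (hβn : β ≤ n)
    (cI : E m) (cJ : E n) {s t : ℝ} (hs : 0 < s) (ht : 0 < t) (z z' : E m × E n) :
    ENNReal.ofReal (s ^ (α - (m : ℝ)) * t ^ (β - (n : ℝ))) *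
      shat m n α β cI cJ s t z * shat m n α β cI cJ s t z'
      ≤ prodKernel m n α β z z' := by
  unfold shat prodKernel
  have ha1 : (0:ℝ) ≤ ‖z.1 - cI‖ / s := div_nonneg (norm_nonneg _) hs.le
  have hb1 : (0:ℝ) ≤ ‖z'.1 - cI‖ / s := div_nonneg (norm_nonneg _) hs.le
  have ha2 : (0:ℝ) ≤ ‖z.2 - cJ‖ / t := div_nonneg (norm_nonneg _) ht.le
  have hb2 : (0:ℝ) ≤ ‖z'.2 - cJ‖ / t := div_nonneg (norm_nonneg _) ht.le
  have key1 : ‖z.1 - z'.1‖ ≤ s * (1 + ‖z.1 - cI‖ / s) * (1 + ‖z'.1 - cI‖ / s) := by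
    have tri : ‖z.1 - z'.1‖ ≤ ‖z.1 - cI‖ + ‖z'.1 - cI‖ := by
      have := norm_sub_le_norm_sub_add_norm_sub (z.1) cI (z'.1)
      rwa [norm_sub_rev cI z'.1] at this
    have e1 : ‖z.1 - cI‖ = s * (‖z.1 - cI‖ / s) := by field_simp
    have e2 : ‖z'.1 - cI‖ = s * (‖z'.1 - cI‖ / s) := by field_simp
    nlinarith [mul_nonneg (mul_nonneg hs.le ha1) hb1, hs.le]
  have key2 : ‖z.2 - z'.2‖ ≤ t * (1 + ‖z.2 - cJ‖ / t) * (1 + ‖z'.2 - cJ‖ / t) := by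
    have tri : ‖z.2 - z'.2‖ ≤ ‖z.2 - cJ‖ + ‖z'.2 - cJ‖ := by
      have := norm_sub_le_norm_sub_add_norm_sub (z.2) cJ (z'.2)
      rwa [norm_sub_rev cJ z'.2] at this
    have e1 : ‖z.2 - cJ‖ = t * (‖z.2 - cJ‖ / t) := by field_simp
    have e2 : ‖z'.2 - cJ‖ = t * (‖z'.2 - cJ‖ / t) := by field_simp
    nlinarith [mul_nonneg (mul_nonneg ht.le ha2) hb2, ht.le]
  have F1 := factor_le (e := α - (m:ℝ)) (by linarith) hs (norm_nonneg _) ha1 hb1 key1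
  have F2 := factor_le (e := β - (n:ℝ)) (by linarith) ht (norm_nonneg _) ha2 hb2 key2
  have expand : ENNReal.ofReal (s ^ (α - (m : ℝ)) * t ^ (β - (n : ℝ))) *
      ENNReal.ofReal ((1 + ‖z.1 - cI‖ / s) ^ (α - (m : ℝ)) *
        (1 + ‖z.2 - cJ‖ / t) ^ (β - (n : ℝ))) *
      ENNReal.ofReal ((1 + ‖z'.1 - cI‖ / s) ^ (α - (m : ℝ)) *
        (1 + ‖z'.2 - cJ‖ / t) ^ (β - (n : ℝ)))
      = (ENNReal.ofReal (s ^ (α - (m:ℝ))) * ENNReal.ofReal ((1 + ‖z.1 - cI‖ / s) ^ (α - (m:ℝ))) *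
          ENNReal.ofReal ((1 + ‖z'.1 - cI‖ / s) ^ (α - (m:ℝ)))) *
        (ENNReal.ofReal (t ^ (β - (n:ℝ))) * ENNReal.ofReal ((1 + ‖z.2 - cJ‖ / t) ^ (β - (n:ℝ))) *
          ENNReal.ofReal ((1 + ‖z'.2 - cJ‖ / t) ^ (β - (n:ℝ)))) := by
    rw [ENNReal.ofReal_mul (Real.rpow_nonneg hs.le _),
      ENNReal.ofReal_mul (Real.rpow_nonneg (one_add_div_pos hs (norm_nonneg _)).le _),
      ENNReal.ofReal_mul (Real.rpow_nonneg (one_add_div_pos hs (norm_nonneg _)).le _)]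
    ring
  rw [expand]
  exact mul_le_mul' F1 F2

/-- **The two-tailed characteristic is dominated by the operator norm.**  If `(σ, ω)` are
locally finite positive Borel measures on `ℝ^m × ℝ^n`, `1 < p, q < ∞`, `0 < α ≤ m`,
`0 < β ≤ n`, and the norm inequality
`(∬ I_{α,β}(fσ)^q dω)^{1/q} ≤ C (∬ f^p dσ)^{1/p}` holds for all `f ≥ 0`, then
`Â_{p,q}(σ,ω) ≤ C`; i.e. for every rectangle (with centers `cI, cJ` and side lengths
`s, t > 0`), `|I|^{α/m−1} |J|^{β/n−1} (∬ ŝ^q dω)^{1/q} (∬ ŝ^{p'} dσ)^{1/p'} ≤ C`. -/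
theorem twoTailed_le_operatorNorm (m n : ℕ) (α β p q : ℝ)
    (hα : 0 < α) (hαm : α ≤ m) (hβ : 0 < β) (hβn : β ≤ n) (hp : 1 < p) (hq : 1 < q)
    (σ ω : Measure (E m × E n)) [IsLocallyFiniteMeasure σ] [IsLocallyFiniteMeasure ω]
    (C : ℝ≥0∞)
    (hC : ∀ f : E m × E n → ℝ≥0∞, Measurable f →
      (∫⁻ z, (∫⁻ z', prodKernel m n α β z z' * f z' ∂σ) ^ q ∂ω) ^ (1 / q)
        ≤ C * (∫⁻ z, f z ^ p ∂σ) ^ (1 / p)) :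
    ∀ (cI : E m) (cJ : E n) (s t : ℝ), 0 < s → 0 < t →
      ENNReal.ofReal (s ^ (α - (m : ℝ)) * t ^ (β - (n : ℝ))) *
          (∫⁻ z, shat m n α β cI cJ s t z ^ q ∂ω) ^ (1 / q) *
          (∫⁻ z, shat m n α β cI cJ s t z ^ (p / (p - 1)) ∂σ) ^ (1 - 1 / p)
        ≤ C := by
  intro cI cJ s t hs ht
  set S := shat m n α β cI cJ s t with hSdef
  have hmS : Measurable S := measurable_shat
  have hSpos : ∀ z, 0 < S z := fun z => shat_pos hs ht z
  have hSnt : ∀ z, S z ≠ ⊤ := fun z => shat_ne_top z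
  have hSle1 : ∀ z, S z ≤ 1 := fun z => shat_le_one hαm hβn hs ht z
  have hp1 : (0:ℝ) < p - 1 := by linarith
  have hppos : (0:ℝ) < p := by linarith
  have hq0 : (0:ℝ) < q := by linarith
  set p' : ℝ := p / (p - 1) with hp'def
  have hp'pos : 0 < p' := div_pos hppos hp1
  have hexp : (p' - 1) * p = p' := by
    rw [hp'def]; field_simp; ring
  have hr : (0:ℝ) < 1 - 1/p := by
    have : 1/p < 1 := by rw [div_lt_one hppos]; linarith
    linarith
  set c : ℝ≥0∞ := ENNReal.ofReal (s ^ (α - (m : ℝ)) * t ^ (β - (n : ℝ))) with hcdef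
  set X : ℝ≥0∞ := (∫⁻ z, S z ^ q ∂ω) ^ (1 / q) with hXdef
  set B : ℕ → Set (E m × E n) := fun k => Metric.closedBall 0 k with hBdef
  set A : ℕ → ℝ≥0∞ := fun k => ∫⁻ z, (B k).indicator (fun z => S z ^ p') z ∂σ with hAdef
  have hBmeas : ∀ k, MeasurableSet (B k) := fun k => Metric.isClosed_closedBall.measurableSet
  have hindmeas : ∀ k, Measurable ((B k).indicator (fun z => S z ^ p')) :=
    fun k => (hmS.pow measurable_const).indicator (hBmeas k)
  -- main claim per k
  have claim : ∀ k : ℕ, c * X * (A k) ^ (1 - 1/p) ≤ C := by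
    intro k
    set f : E m × E n → ℝ≥0∞ := (B k).indicator (fun z => S z ^ (p' - 1)) with hfdef
    have hfmeas : Measurable f :=
      (hmS.pow measurable_const).indicator (hBmeas k)
    have h1 := hC f hfmeas
    have hRHS : (∫⁻ z, f z ^ p ∂σ) = A k := by
      rw [hAdef]
      apply lintegral_congr
      intro z
      rw [hfdef]
      by_cases hz : z ∈ B k
      · simp only [Set.indicator_of_mem hz]
        rw [← ENNReal.rpow_mul, hexp]
      · simp only [Set.indicator_of_notMem hz]
        exact ENNReal.zero_rpow_of_pos hppos
    rw [hRHS] at h1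
    -- pointwise lower bound for the inner integral
    have hLow : ∀ z, c * S z * A k ≤ ∫⁻ z', prodKernel m n α β z z' * f z' ∂σ := by
      intro z
      have hpt : ∀ z', (c * S z) * (B k).indicator (fun w => S w ^ p') z'
          ≤ prodKernel m n α β z z' * f z' := by
        intro z'
        rw [hfdef]
        by_cases hz' : z' ∈ B k
        · simp only [Set.indicator_of_mem hz']
          have hrw : S z' ^ p' = S z' * S z' ^ (p' - 1) := by
            have h := ENNReal.rpow_add (x := S z') 1 (p' - 1) (hSpos z').ne' (hSnt z')
            rw [show (1:ℝ) + (p' - 1) = p' from by ring] at h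
            simpa using h
          rw [hrw, show (c * S z) * (S z' * S z' ^ (p' - 1))
              = (c * S z * S z') * S z' ^ (p' - 1) from by ring]
          exact mul_le_mul_left (kernel_lower hαm hβn cI cJ hs ht z z') _
        · simp [Set.indicator_of_notMem hz']
      calc c * S z * A k = ∫⁻ z', (c * S z) * (B k).indicator (fun w => S w ^ p') z' ∂σ := by
            rw [lintegral_const_mul _ (hindmeas k), hAdef]
        _ ≤ _ := lintegral_mono hpt
    -- lower bound the LHS of h1
    have hL2 : c * A k * X ≤ (∫⁻ z, (∫⁻ z', prodKernel m n α β z z' * f z' ∂σ) ^ q ∂ω) ^ (1/q) := by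
      have heq : (∫⁻ z, (c * S z * A k) ^ q ∂ω) ^ (1/q) = c * A k * X := by
        have hptq : ∀ z, (c * S z * A k) ^ q = (c * A k) ^ q * S z ^ q := fun z => by
          rw [show c * S z * A k = (c * A k) * S z from by ring,
            ENNReal.mul_rpow_of_nonneg _ _ hq0.le]
        rw [lintegral_congr hptq, lintegral_const_mul _ (hmS.pow measurable_const),
          ENNReal.mul_rpow_of_nonneg _ _ (by positivity : (0:ℝ) ≤ 1/q),
          ← ENNReal.rpow_mul, mul_one_div_cancel hq0.ne', ENNReal.rpow_one, hXdef]
      rw [← heq]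
      exact ENNReal.rpow_le_rpow
        (lintegral_mono fun z => ENNReal.rpow_le_rpow (hLow z) hq0.le) (by positivity)
    have hmain : c * A k * X ≤ C * A k ^ (1/p) := le_trans hL2 h1
    -- finiteness of A k
    have hAfin : A k < ⊤ := by
      have hle : A k ≤ σ (B k) := by
        rw [hAdef]
        calc ∫⁻ z, (B k).indicator (fun z => S z ^ p') z ∂σ
            ≤ ∫⁻ z, (B k).indicator (fun _ => (1:ℝ≥0∞)) z ∂σ := by
              apply lintegral_mono
              intro z
              by_cases hz : z ∈ B k
              · simp only [Set.indicator_of_mem hz]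
                exact ENNReal.rpow_le_one (hSle1 z) hp'pos.le
              · simp [Set.indicator_of_notMem hz]
          _ = σ (B k) := by
              rw [lintegral_indicator (hBmeas k)]
              simp
      exact lt_of_le_of_lt hle ((isCompact_closedBall _ _).measure_lt_top)
    rcases eq_or_ne (A k) 0 with hA0 | hA0
    · rw [hA0, ENNReal.zero_rpow_of_pos hr, mul_zero]
      exact zero_le
    · have h1p : A k ^ (1/p) ≠ 0 :=
        (ENNReal.rpow_pos (hA0.bot_lt) hAfin.ne).ne'
      have h1pt : A k ^ (1/p) ≠ ⊤ :=
        (ENNReal.rpow_lt_top_of_nonneg (by positivity) hAfin.ne).ne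
      rw [← ENNReal.mul_le_mul_iff_left h1p h1pt]
      calc c * X * A k ^ (1 - 1/p) * A k ^ (1/p)
          = c * X * (A k ^ (1 - 1/p) * A k ^ (1/p)) := by ring
        _ = c * X * A k := by
            rw [← ENNReal.rpow_add _ _ hA0 hAfin.ne,
              show (1 - 1/p) + 1/p = 1 from by ring, ENNReal.rpow_one]
        _ = c * A k * X := by ring
        _ ≤ C * A k ^ (1/p) := hmain
  -- monotone convergence: the full integral is the sup of the truncated ones
  have hmono : Monotone fun k => (B k).indicator (fun z => S z ^ p') := by
    intro i j hij
    exact Set.indicator_le_indicator_of_subset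
      (Metric.closedBall_subset_closedBall (by exact_mod_cast hij)) (fun z => zero_le)
  have hsup : (∫⁻ z, S z ^ p' ∂σ) = ⨆ k, A k := by
    have hpt : ∀ z, S z ^ p' = ⨆ k, (B k).indicator (fun w => S w ^ p') z := by
      intro z
      apply le_antisymm
      · refine le_trans ?_ (le_iSup (fun k => (B k).indicator (fun w => S w ^ p') z) ⌈‖z‖⌉₊)
        rw [Set.indicator_of_mem]
        simp only [hBdef, Metric.mem_closedBall, dist_zero_right]
        exact Nat.le_ceil _
      · exact iSup_le fun k => Set.indicator_le_self _ _ z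
    rw [lintegral_congr hpt, lintegral_iSup hindmeas hmono]
  rw [hsup,
    Monotone.map_iSup_of_continuousAt (f := fun x : ℝ≥0∞ => x ^ (1 - 1/p))
      ENNReal.continuous_rpow_const.continuousAt
      (fun a b hab => ENNReal.rpow_le_rpow hab hr.le)
      (by simpa using ENNReal.zero_rpow_of_pos hr),
    ENNReal.mul_iSup]
  exact iSup_le claim
end
end

section
/- Let (σ,ω) be a locally finite weight pair in ℝ^n and 1<p≤q<∞, 0<α<n. If the dyadic characteristic A^{α,dy}_{p,q}(σ,ω) = sup over dyadic cubes Q of |Q|^{α/n + 1/q − 1/p} (|Q|_ω/|Q|)^{1/q} (|Q|_σ/|Q|)^{1/p'} is finite, then the dyadic fractional maximal operator M_α^{dy}(fσ)(x) = sup over dyadic Q containing x of |Q|^{α/n−1} ∫_Q f dσ satisfies the weak type inequality sup_{λ>0} λ |{M_α^{dy}(fσ) > λ}|_ω^{1/q} ≤ A^{α,dy}_{p,q}(σ,ω) ‖f‖_{L^p(σ)} for all f ≥ 0. -/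
/-!
Cut the superlevel set off at cubes of generation at most `N`. Each of its points lies in a
maximal dyadic cube `Q` with `λ < |Q|^{α/n-1} ∫_Q f dσ`, and since dyadic cubes are nested,
distinct maximal cubes are disjoint. On each such `Q`, Hölder's inequality and the characteristic
give `λ^q |Q|_ω ≤ A^q (∫_Q f^p dσ)^{q/p}`. Summing over the maximal cubes, with
`∑ aᵢ^{q/p} ≤ (∑ aᵢ)^{q/p}` because `q/p ≥ 1` and with their disjointness, bounds `λ^q` times the
`ω`-measure of the truncated set by `A^q ‖f‖_{L^p(σ)}^q`; then let `N → ∞`.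
-/

open MeasureTheory ENNReal

noncomputable section

/-- The standard dyadic cube of generation `k` indexed by `a ∈ ℤ^n`. -/
def dyadicCube (n : ℕ) (k : ℤ) (a : Fin n → ℤ) : Set (Fin n → ℝ) :=
  {x | ∀ i, (a i : ℝ) * 2 ^ k ≤ x i ∧ x i < ((a i : ℝ) + 1) * 2 ^ k}

/-- The dyadic fractional maximal operator `M_α^{dy}(fσ)`. -/
noncomputable def dyadicMaximal (n : ℕ) (α : ℝ) (σ : Measure (Fin n → ℝ))
    (f : (Fin n → ℝ) → ℝ≥0∞) (x : Fin n → ℝ) : ℝ≥0∞ :=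
  ⨆ (k : ℤ) (a : Fin n → ℤ) (_ : x ∈ dyadicCube n k a),
    ENNReal.ofReal ((2 : ℝ) ^ (k * (n : ℤ))) ^ (α / (n : ℝ) - 1) *
      ∫⁻ y in dyadicCube n k a, f y ∂σ

namespace ENNReal

theorem tsum_rpow_le_rpow_tsum {ι : Type*} (b : ι → ℝ≥0∞) {r : ℝ} (hr : 1 ≤ r) :
    ∑' i, b i ^ r ≤ (∑' i, b i) ^ r := by
  have hr' : 0 ≤ r - 1 := by linarith
  have hsplit (x : ℝ≥0∞) : x ^ r = x ^ (r - 1) * x := by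
    conv_lhs => rw [← sub_add_cancel r 1, rpow_add_of_nonneg _ _ hr' zero_le_one, rpow_one]
  calc ∑' i, b i ^ r = ∑' i, b i ^ (r - 1) * b i := tsum_congr fun i => hsplit (b i)
    _ ≤ ∑' i, (∑' j, b j) ^ (r - 1) * b i :=
      ENNReal.tsum_le_tsum fun i => by gcongr; exact ENNReal.le_tsum i
    _ = (∑' j, b j) ^ r := by rw [ENNReal.tsum_mul_left, hsplit]

theorem mul_rpow_one_div_le_iff {a b c d : ℝ≥0∞} {p q : ℝ} (hq : 0 < q) :
    a * b ^ (1 / q) ≤ c * d ^ (1 / p) ↔ a ^ q * b ≤ c ^ q * d ^ (q / p) := by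
  rw [← rpow_le_rpow_iff hq, mul_rpow_of_nonneg _ _ hq.le, mul_rpow_of_nonneg _ _ hq.le,
    ← rpow_mul, ← rpow_mul, one_div_mul_cancel hq.ne', rpow_one, one_div_mul_eq_div]

theorem rpow_mul_div_rpow_mul_div_rpow {V w s : ℝ≥0∞} (hV₀ : V ≠ 0) (hV : V ≠ ⊤)
    (γ : ℝ) {a b : ℝ} (ha : 0 ≤ a) (hb : 0 ≤ 1 - b) :
    V ^ (γ + a - b) * (w / V) ^ a * (s / V) ^ (1 - b) = V ^ (γ - 1) * w ^ a * s ^ (1 - b) := by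
  rw [div_rpow_of_nonneg _ _ ha, div_rpow_of_nonneg _ _ hb, div_eq_mul_inv, div_eq_mul_inv,
    ← rpow_neg, ← rpow_neg, show γ - 1 = γ + a - b + -a + -(1 - b) by ring,
    rpow_add _ _ hV₀ hV, rpow_add _ _ hV₀ hV]
  ring

end ENNReal

namespace MeasureTheory

theorem lintegral_le_lintegral_rpow_mul_measure_univ {α : Type*}
    [MeasurableSpace α] (μ : Measure α) {p : ℝ} (hp : 1 < p) {f : α → ℝ≥0∞}
    (hf : AEMeasurable f μ) :
    ∫⁻ x, f x ∂μ ≤ (∫⁻ x, f x ^ p ∂μ) ^ (1 / p) * μ Set.univ ^ (1 - 1 / p) := by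
  have h := ENNReal.lintegral_mul_le_Lp_mul_Lq μ (Real.HolderConjugate.conjExponent hp) hf
    aemeasurable_const (g := fun _ => 1)
  simpa [Real.conjExponent, one_div_div, sub_div, div_self (by positivity : p ≠ 0)] using h

theorem mul_measure_iUnion_le_mul_lintegral_rpow {α ι : Type*}
    [MeasurableSpace α] [Countable ι] (σ ω : Measure α) {s : ι → Set α}
    (hs : ∀ i, MeasurableSet (s i)) (hd : Pairwise (Function.onFun Disjoint s))
    (g : α → ℝ≥0∞) {a c : ℝ≥0∞} {r : ℝ} (hr : 1 ≤ r)
    (h : ∀ i, a * ω (s i) ≤ c * (∫⁻ x in s i, g x ∂σ) ^ r) :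
    a * ω (⋃ i, s i) ≤ c * (∫⁻ x, g x ∂σ) ^ r :=
  calc a * ω (⋃ i, s i) ≤ ∑' i, a * ω (s i) := by
        rw [ENNReal.tsum_mul_left]; gcongr; exact measure_iUnion_le s
    _ ≤ ∑' i, c * (∫⁻ x in s i, g x ∂σ) ^ r := ENNReal.tsum_le_tsum h
    _ ≤ c * (∑' i, ∫⁻ x in s i, g x ∂σ) ^ r := by
        rw [ENNReal.tsum_mul_left]; gcongr; exact ENNReal.tsum_rpow_le_rpow_tsum _ hr
    _ ≤ c * (∫⁻ x, g x ∂σ) ^ r := by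
        rw [← lintegral_iUnion hs hd]; gcongr; exact Measure.restrict_le_self

theorem mul_measure_rpow_le_of_lt_rpow_mul_setLIntegral {α : Type*} [MeasurableSpace α]
    {σ ω : Measure α} {s : Set α} {V A lam : ℝ≥0∞} {γ p q : ℝ} {f : α → ℝ≥0∞}
    (hV₀ : V ≠ 0) (hV : V ≠ ⊤) (hp : 1 < p) (hq : 0 < q) (hf : Measurable f)
    (hA : V ^ (γ + 1 / q - 1 / p) * (ω s / V) ^ (1 / q) * (σ s / V) ^ (1 - 1 / p) ≤ A)
    (hlam : lam < V ^ (γ - 1) * ∫⁻ y in s, f y ∂σ) :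
    lam * ω s ^ (1 / q) ≤ A * (∫⁻ y in s, f y ^ p ∂σ) ^ (1 / p) := by
  have hp' : 0 ≤ 1 - 1 / p := sub_nonneg.2 ((div_le_one (by linarith)).2 hp.le)
  rw [rpow_mul_div_rpow_mul_div_rpow hV₀ hV γ (by positivity) hp'] at hA
  have holder := lintegral_le_lintegral_rpow_mul_measure_univ (σ.restrict s) hp hf.aemeasurable
  rw [Measure.restrict_apply_univ] at holder
  calc lam * ω s ^ (1 / q)
      ≤ V ^ (γ - 1) * ((∫⁻ y in s, f y ^ p ∂σ) ^ (1 / p) * σ s ^ (1 - 1 / p)) * ω s ^ (1 / q) := by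
        gcongr; exact hlam.le.trans (by gcongr)
    _ = V ^ (γ - 1) * ω s ^ (1 / q) * σ s ^ (1 - 1 / p) * (∫⁻ y in s, f y ^ p ∂σ) ^ (1 / p) := by
        ring
    _ ≤ A * (∫⁻ y in s, f y ^ p ∂σ) ^ (1 / p) := by gcongr

end MeasureTheory

theorem Int.floor_div_two_zpow_of_le (x : ℝ) {k k' : ℤ} (h : k ≤ k') :
    ⌊x / 2 ^ k'⌋ = ⌊x / 2 ^ k⌋ / 2 ^ (k' - k).toNat := by
  have hk' : (2 : ℝ) ^ k' = 2 ^ k * ((2 ^ (k' - k).toNat : ℕ) : ℝ) := by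
    rw [Nat.cast_pow, Nat.cast_ofNat, ← zpow_natCast, ← zpow_add₀ two_ne_zero]
    congr 1; omega
  rw [hk', ← div_div, Int.floor_div_natCast]
  norm_cast

section DyadicCubes

variable {n : ℕ}

theorem mem_dyadicCube_iff {k : ℤ} {a : Fin n → ℤ} {x : Fin n → ℝ} :
    x ∈ dyadicCube n k a ↔ ∀ i, ⌊x i / 2 ^ k⌋ = a i := by
  have h2k : (0 : ℝ) < 2 ^ k := zpow_pos two_pos k
  simp only [dyadicCube, Set.mem_ofPred_eq, Int.floor_eq_iff, le_div_iff₀ h2k, div_lt_iff₀ h2k]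

theorem measurableSet_dyadicCube (k : ℤ) (a : Fin n → ℤ) :
    MeasurableSet (dyadicCube n k a) := by
  have : dyadicCube n k a =
      Set.univ.pi fun i => Set.Ico ((a i : ℝ) * 2 ^ k) ((a i + 1) * 2 ^ k) := by
    ext x; simp [dyadicCube]
  rw [this]
  exact MeasurableSet.univ_pi fun _ => measurableSet_Ico

theorem eq_of_mem_dyadicCube {k : ℤ} {a b : Fin n → ℤ} {x : Fin n → ℝ}
    (ha : x ∈ dyadicCube n k a) (hb : x ∈ dyadicCube n k b) : a = b := by
  rw [mem_dyadicCube_iff] at ha hb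
  exact funext fun i => (ha i).symm.trans (hb i)

theorem dyadicCube_subset_of_le {k k' : ℤ} {a a' : Fin n → ℤ} {x : Fin n → ℝ} (h : k ≤ k')
    (hx : x ∈ dyadicCube n k a) (hx' : x ∈ dyadicCube n k' a') :
    dyadicCube n k a ⊆ dyadicCube n k' a' := by
  intro y hy
  rw [mem_dyadicCube_iff] at hx hx' hy ⊢
  intro i
  rw [Int.floor_div_two_zpow_of_le _ h, hy, ← hx, ← Int.floor_div_two_zpow_of_le _ h, hx']

def IsMaximalDyadic (P : ℤ × (Fin n → ℤ) → Prop) (j : ℤ × (Fin n → ℤ)) : Prop :=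
  P j ∧ ∀ j', P j' → dyadicCube n j.1 j.2 ⊆ dyadicCube n j'.1 j'.2 → j'.1 ≤ j.1

theorem exists_isMaximalDyadic_mem {P : ℤ × (Fin n → ℤ) → Prop} {N : ℤ}
    (hP : ∀ j, P j → j.1 ≤ N) {j₀ : ℤ × (Fin n → ℤ)} (h₀ : P j₀) {x : Fin n → ℝ}
    (hx : x ∈ dyadicCube n j₀.1 j₀.2) :
    ∃ j, IsMaximalDyadic P j ∧ x ∈ dyadicCube n j.1 j.2 := by
  obtain ⟨k, ⟨a, hPa, hxa⟩, hk⟩ := Int.exists_greatest_of_bdd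
    (P := fun k => ∃ a, P (k, a) ∧ x ∈ dyadicCube n k a)
    ⟨N, fun k ⟨a, hPa, _⟩ => hP (k, a) hPa⟩ ⟨j₀.1, j₀.2, h₀, hx⟩
  exact ⟨(k, a), ⟨hPa, fun j' hPj' hsub => hk j'.1 ⟨j'.2, hPj', hsub hxa⟩⟩, hxa⟩

theorem pairwiseDisjoint_isMaximalDyadic (P : ℤ × (Fin n → ℤ) → Prop) :
    {j | IsMaximalDyadic P j}.PairwiseDisjoint fun j => dyadicCube n j.1 j.2 := by
  intro j ⟨hPj, hj⟩ j' ⟨hPj', hj'⟩ hne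
  refine Set.disjoint_left.2 fun x hx hx' => hne ?_
  have hk : j.1 = j'.1 := by
    rcases le_total j.1 j'.1 with h | h
    · exact h.antisymm (hj j' hPj' (dyadicCube_subset_of_le h hx hx'))
    · exact (hj' j hPj (dyadicCube_subset_of_le h hx' hx)).antisymm h
  exact Prod.ext hk (eq_of_mem_dyadicCube hx (hk ▸ hx'))

end DyadicCubes

theorem dyadicMaximal_weakType_general (n : ℕ) (p q α : ℝ)
    (hp : 1 < p) (hpq : p ≤ q)
    (σ ω : Measure (Fin n → ℝ))
    (A : ℝ≥0∞)
    (hA : ∀ (k : ℤ) (a : Fin n → ℤ),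
      ENNReal.ofReal ((2 : ℝ) ^ (k * (n : ℤ))) ^ (α / (n : ℝ) + 1 / q - 1 / p) *
          (ω (dyadicCube n k a) / ENNReal.ofReal ((2 : ℝ) ^ (k * (n : ℤ)))) ^ (1 / q) *
          (σ (dyadicCube n k a) / ENNReal.ofReal ((2 : ℝ) ^ (k * (n : ℤ)))) ^ (1 - 1 / p)
        ≤ A) :
    ∀ f : (Fin n → ℝ) → ℝ≥0∞, Measurable f → ∀ lam : ℝ≥0∞,
      lam * (ω {x | lam < dyadicMaximal n α σ f x}) ^ (1 / q)
        ≤ A * (∫⁻ x, f x ^ p ∂σ) ^ (1 / p) := by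
  intro f hf lam
  have hq : 0 < q := by linarith
  let Bad (j : ℤ × (Fin n → ℤ)) : Prop :=
    lam < ENNReal.ofReal ((2 : ℝ) ^ (j.1 * (n : ℤ))) ^ (α / (n : ℝ) - 1) *
      ∫⁻ y in dyadicCube n j.1 j.2, f y ∂σ
  let E (N : ℤ) : Set (Fin n → ℝ) := {x | ∃ j, (Bad j ∧ j.1 ≤ N) ∧ x ∈ dyadicCube n j.1 j.2}
  have hE : {x | lam < dyadicMaximal n α σ f x} = ⋃ N, E N := by
    ext x
    simp only [Set.mem_ofPred_eq, Set.mem_iUnion, dyadicMaximal, lt_iSup_iff, E, Bad]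
    exact ⟨fun ⟨k, a, hx, hlt⟩ => ⟨k, (k, a), ⟨hlt, le_rfl⟩, hx⟩,
      fun ⟨_, j, ⟨hlt, _⟩, hx⟩ => ⟨j.1, j.2, hx, hlt⟩⟩
  have hE_mono : Monotone E := fun _ _ h _ ⟨j, ⟨hj, hjN⟩, hx⟩ => ⟨j, ⟨hj, hjN.trans h⟩, hx⟩
  rw [mul_rpow_one_div_le_iff hq, hE, hE_mono.measure_iUnion, mul_iSup]
  refine iSup_le fun N => ?_
  let S := {j | IsMaximalDyadic (fun j => Bad j ∧ j.1 ≤ N) j}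
  have hcover : E N ⊆ ⋃ j : S, dyadicCube n j.1.1 j.1.2 := fun x ⟨_, h₀, hx⟩ =>
    let ⟨j, hj, hxj⟩ := exists_isMaximalDyadic_mem (fun _ hj => hj.2) h₀ hx
    Set.mem_iUnion.2 ⟨⟨j, hj⟩, hxj⟩
  have hvol (k : ℤ) : ENNReal.ofReal ((2 : ℝ) ^ (k * (n : ℤ))) ≠ 0 :=
    ofReal_ne_zero_iff.2 (zpow_pos two_pos _)
  calc lam ^ q * ω (E N) ≤ lam ^ q * ω (⋃ j : S, dyadicCube n j.1.1 j.1.2) := by gcongr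
    _ ≤ A ^ q * (∫⁻ x, f x ^ p ∂σ) ^ (q / p) :=
      mul_measure_iUnion_le_mul_lintegral_rpow σ ω (fun _ => measurableSet_dyadicCube _ _)
        (pairwiseDisjoint_isMaximalDyadic _).subtype _ ((one_le_div₀ (by linarith)).2 hpq)
        fun j => (mul_rpow_one_div_le_iff hq).1 <|
          mul_measure_rpow_le_of_lt_rpow_mul_setLIntegral (hvol _) ofReal_ne_top hp hq hf
            (hA _ _) j.2.1.1

/-- **Weak type inequality for the dyadic fractional maximal operator.**  If the dyadic
characteristic `A^{α,dy}_{p,q}(σ,ω)` is bounded by `A`, i.e. for every dyadic cube `Q`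
(of volume `|Q| = 2^{kn}`), `|Q|^{α/n + 1/q − 1/p} (|Q|_ω/|Q|)^{1/q} (|Q|_σ/|Q|)^{1/p'} ≤ A`,
then `λ |{M_α^{dy}(fσ) > λ}|_ω^{1/q} ≤ A ‖f‖_{L^p(σ)}` for all `f ≥ 0` and `λ > 0`. -/
theorem dyadicMaximal_weakType (n : ℕ) (hn : 0 < n) (p q α : ℝ)
    (hp : 1 < p) (hpq : p ≤ q) (hα : 0 < α) (hαn : α < n)
    (σ ω : Measure (Fin n → ℝ)) [IsLocallyFiniteMeasure σ] [IsLocallyFiniteMeasure ω]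
    (A : ℝ≥0∞)
    (hA : ∀ (k : ℤ) (a : Fin n → ℤ),
      ENNReal.ofReal ((2 : ℝ) ^ (k * (n : ℤ))) ^ (α / (n : ℝ) + 1 / q - 1 / p) *
          (ω (dyadicCube n k a) / ENNReal.ofReal ((2 : ℝ) ^ (k * (n : ℤ)))) ^ (1 / q) *
          (σ (dyadicCube n k a) / ENNReal.ofReal ((2 : ℝ) ^ (k * (n : ℤ)))) ^ (1 - 1 / p)
        ≤ A) :
    ∀ f : (Fin n → ℝ) → ℝ≥0∞, Measurable f → ∀ lam : ℝ≥0∞,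
      lam * (ω {x | lam < dyadicMaximal n α σ f x}) ^ (1 / q)
        ≤ A * (∫⁻ x, f x ^ p ∂σ) ^ (1 / p) :=
  dyadicMaximal_weakType_general n p q α hp hpq σ ω A hA

end
end

section
/- If the two-weight norm inequality ‖(I_{α,β}f) w‖_{L^q(ℝ^{m+n})} ≤ N ‖f w‖_{L^p(ℝ^{m+n})} holds for some weight w (one-weight case v = w) with finite constant N, where 1<p,q<∞ and α,β>0, then necessarily 1/p − 1/q = α/m = β/n. -/
open MeasureTheory ENNReal

noncomputable section

/-- The product fractional integral `I_{α,β}^{m,n} f`. -/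
noncomputable def Iab (m n : ℕ) (α β : ℝ) (f : E m × E n → ℝ≥0∞) (z : E m × E n) : ℝ≥0∞ :=
  ∫⁻ z', prodKernel m n α β z z' * f z'

/-! Test the inequality with `f = 1_S · w^{-p'}` on a rectangle `S`, where the kernel is at least
`κ` on `T × S` for a congruent rectangle `T` at distance comparable to its sides: this gives
`κ (∫_S w^{-p'})^{1/p'} (∫_T w^q)^{1/q} ≤ N`. Exchanging `S` and `T` and using Hölder's inequality
`|R|^{1/q+1/p'} ≤ (∫_R w^q)^{1/q} (∫_R w^{-p'})^{1/p'}` on both rectangles yields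
`κ |S|^{1/q+1/p'} ≤ N`. For sides `r`, `r'` the left side is a constant times
`r^{α-m+m(1/q+1/p')} r'^{β-n+n(1/q+1/p')}`, bounded for all `r, r' > 0` only if both exponents
vanish, that is `α/m = β/n = 1 - 1/q - 1/p' = 1/p - 1/q`. -/

open Metric Set

def HasWeightedNormIneq {X : Type*} [MeasurableSpace X] (μ : Measure X) (k : X → X → ℝ≥0∞)
    (w : X → ℝ≥0∞) (p q : ℝ) (N : ℝ≥0∞) : Prop :=
  ∀ f : X → ℝ≥0∞, Measurable f →
    (∫⁻ z, ((∫⁻ z', k z z' * f z' ∂μ) * w z) ^ q ∂μ) ^ (1 / q)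
      ≤ N * (∫⁻ z, (f z * w z) ^ p ∂μ) ^ (1 / p)

lemma mul_rpow_le_self_of_le_rpow_neg {x y : ℝ≥0∞} {p : ℝ} (hp : 1 < p) (hy0 : y ≠ 0)
    (hyt : y ≠ ∞) (hx : x ≤ y ^ (-p.conjExponent)) : (x * y) ^ p ≤ x := by
  have hpp := Real.HolderConjugate.conjExponent hp
  have hxp : x ^ p = x * x ^ (p - 1) := by
    conv_lhs => rw [← add_sub_cancel 1 p]
    rw [ENNReal.rpow_add_of_nonneg _ _ zero_le_one (by linarith), ENNReal.rpow_one]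
  calc (x * y) ^ p = x * x ^ (p - 1) * y ^ p := by
        rw [ENNReal.mul_rpow_of_nonneg _ _ hpp.nonneg, hxp]
    _ ≤ x * (y ^ (-p.conjExponent)) ^ (p - 1) * y ^ p := by gcongr
    _ = x := by
        rw [← ENNReal.rpow_mul, neg_mul, mul_comm p.conjExponent, hpp.sub_one_mul_conj, mul_assoc,
          ← ENNReal.rpow_add _ _ hy0 hyt, neg_add_cancel, ENNReal.rpow_zero, mul_one]

lemma mul_rpow_conjExponent_le_of_mul_le {a A N : ℝ≥0∞} {p : ℝ} (hp : 1 < p) (hA : A ≠ ∞)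
    (h : a * A ≤ N * A ^ (1 / p)) : a * A ^ (1 / p.conjExponent) ≤ N := by
  have hpp := Real.HolderConjugate.conjExponent hp
  rcases eq_or_ne A 0 with rfl | hA0
  · rw [ENNReal.zero_rpow_of_pos hpp.symm.one_div_pos, mul_zero]
    exact zero_le
  have hApos : A ^ (1 / p) ≠ 0 := (ENNReal.rpow_pos (pos_iff_ne_zero.2 hA0) hA).ne'
  have hAfin : A ^ (1 / p) ≠ ∞ := ENNReal.rpow_ne_top_of_nonneg hpp.one_div_nonneg hA
  rw [← ENNReal.mul_le_mul_iff_left hApos hAfin, mul_assoc, ← ENNReal.rpow_add _ _ hA0 hA,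
    add_comm, hpp.one_div_add_one_div, one_div_one, ENNReal.rpow_one]
  exact h

lemma measure_univ_rpow_le_lintegral_rpow_mul_lintegral_rpow_neg {X : Type*}
    [MeasurableSpace X] {μ : Measure X} {w : X → ℝ≥0∞} (hw : AEMeasurable w μ)
    (hw0 : ∀ z, w z ≠ 0) (hwt : ∀ z, w z ≠ ∞) {p' q : ℝ} (hp' : 0 < p') (hq : 0 < q) :
    μ univ ^ (1 / q + 1 / p') ≤
      (∫⁻ z, w z ^ q ∂μ) ^ (1 / q) * (∫⁻ z, w z ^ (-p') ∂μ) ^ (1 / p') := by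
  set c := 1 / q + 1 / p'
  have hc : 0 < c := by positivity
  have hcq : 1 / c < q := by
    rw [div_lt_iff₀ hc, show q * c = 1 + q / p' by simp only [c]; field_simp]
    linarith [div_pos hq hp']
  have holder := ENNReal.lintegral_Lp_mul_le_Lq_mul_Lr (r := p') (one_div_pos.2 hc) hcq
    (by rw [one_div_one_div]) μ hw hw.inv
  simpa [ENNReal.mul_inv_cancel (hw0 _) (hwt _), ENNReal.inv_rpow, ← ENNReal.rpow_neg]
    using holder

namespace HasWeightedNormIneq

variable {X : Type*} [MeasurableSpace X] {μ : Measure X} {k : X → X → ℝ≥0∞} {w : X → ℝ≥0∞}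
  {p q : ℝ} {N κ : ℝ≥0∞} {S T : Set X}

lemma mul_setLIntegral_le (h : HasWeightedNormIneq μ k w p q N) (hp : 1 < p) (hq : 0 < q)
    (hw0 : ∀ z, w z ≠ 0) (hwt : ∀ z, w z ≠ ∞) (hS : MeasurableSet S) (hT : MeasurableSet T)
    (hk : ∀ z ∈ T, ∀ z' ∈ S, κ ≤ k z z') {g : X → ℝ≥0∞} (hg : Measurable g)
    (hgw : ∀ z, g z ≤ w z ^ (-p.conjExponent)) :
    κ * (∫⁻ z in T, w z ^ q ∂μ) ^ (1 / q) * ∫⁻ z in S, g z ∂μ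
      ≤ N * (∫⁻ z in S, g z ∂μ) ^ (1 / p) := by
  set f := S.indicator g
  set A := ∫⁻ z in S, g z ∂μ
  have hTf : ∀ z ∈ T, κ * A ≤ ∫⁻ z', k z z' * f z' ∂μ := fun z hz => calc
    κ * A = ∫⁻ z' in S, κ * g z' ∂μ := (lintegral_const_mul κ hg).symm
    _ ≤ ∫⁻ z' in S, k z z' * g z' ∂μ := setLIntegral_mono' hS fun z' hz' => by
      gcongr; exact hk z hz z' hz'
    _ = ∫⁻ z', k z z' * f z' ∂μ := by
      simp_rw [f, ← indicator_mul_right]; exact (lintegral_indicator hS _).symm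
  have hfw : ∀ z, (f z * w z) ^ p ≤ f z := fun z => by
    by_cases hz : z ∈ S
    · simpa [f, hz] using mul_rpow_le_self_of_le_rpow_neg hp (hw0 z) (hwt z) (hgw z)
    · simp [f, hz, ENNReal.zero_rpow_of_pos (by linarith : 0 < p)]
  calc κ * (∫⁻ z in T, w z ^ q ∂μ) ^ (1 / q) * A
      = ((κ * A) ^ q * ∫⁻ z in T, w z ^ q ∂μ) ^ (1 / q) := by
        rw [ENNReal.mul_rpow_of_nonneg _ _ (by positivity), ← ENNReal.rpow_mul,
          mul_one_div_cancel hq.ne', ENNReal.rpow_one]; ring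
    _ ≤ (∫⁻ z, ((∫⁻ z', k z z' * f z' ∂μ) * w z) ^ q ∂μ) ^ (1 / q) := by
        gcongr
        calc (κ * A) ^ q * ∫⁻ z in T, w z ^ q ∂μ ≤ ∫⁻ z in T, (κ * A * w z) ^ q ∂μ := by
              simp_rw [ENNReal.mul_rpow_of_nonneg _ _ hq.le]
              exact lintegral_const_mul_le _ _
          _ ≤ ∫⁻ z in T, ((∫⁻ z', k z z' * f z' ∂μ) * w z) ^ q ∂μ :=
              setLIntegral_mono' hT fun z hz => by gcongr; exact hTf z hz
          _ ≤ _ := setLIntegral_le_lintegral _ _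
    _ ≤ N * (∫⁻ z, (f z * w z) ^ p ∂μ) ^ (1 / p) := h f (hg.indicator hS)
    _ ≤ N * A ^ (1 / p) := by
        gcongr
        calc ∫⁻ z, (f z * w z) ^ p ∂μ ≤ ∫⁻ z, f z ∂μ := lintegral_mono hfw
          _ = A := lintegral_indicator hS _

lemma mul_setLIntegral_rpow_neg_le (h : HasWeightedNormIneq μ k w p q N) (hp : 1 < p)
    (hq : 0 < q) (hwm : Measurable w) (hw0 : ∀ z, w z ≠ 0) (hwt : ∀ z, w z ≠ ∞)
    (hS : MeasurableSet S) (hSfin : μ S ≠ ∞) (hT : MeasurableSet T)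
    (hk : ∀ z ∈ T, ∀ z' ∈ S, κ ≤ k z z') :
    κ * (∫⁻ z in T, w z ^ q ∂μ) ^ (1 / q) *
      (∫⁻ z in S, w z ^ (-p.conjExponent) ∂μ) ^ (1 / p.conjExponent) ≤ N := by
  have hpp := Real.HolderConjugate.conjExponent hp
  set v := fun z => w z ^ (-p.conjExponent)
  have hvm : Measurable v := hwm.pow_const _
  -- truncate the dual weight so that the test functions have finite integral
  set g : ℕ → X → ℝ≥0∞ := fun n z => min (v z) n
  have hg_le : ∀ n, κ * (∫⁻ z in T, w z ^ q ∂μ) ^ (1 / q) *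
      (∫⁻ z in S, g n z ∂μ) ^ (1 / p.conjExponent) ≤ N := fun n => by
    refine mul_rpow_conjExponent_le_of_mul_le hp ?_
      (h.mul_setLIntegral_le hp hq hw0 hwt hS hT hk (hvm.min measurable_const)
        fun z => min_le_left _ _)
    refine ne_top_of_le_ne_top (ENNReal.mul_ne_top (ENNReal.natCast_ne_top n) hSfin) ?_
    calc ∫⁻ z in S, g n z ∂μ ≤ ∫⁻ _ in S, (n : ℝ≥0∞) ∂μ := lintegral_mono fun z => min_le_right _ _
      _ = n * μ S := setLIntegral_const _ _
  have hg_sup : ∫⁻ z in S, v z ∂μ = ⨆ n, ∫⁻ z in S, g n z ∂μ := by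
    rw [← lintegral_iSup (fun n => hvm.min measurable_const)
      fun i j hij z => min_le_min le_rfl (Nat.cast_le.2 hij)]
    congr 1 with z
    rw [← inf_iSup_eq, ENNReal.iSup_natCast, inf_top_eq]
  rw [hg_sup, (ENNReal.monotone_rpow_of_nonneg hpp.symm.one_div_nonneg).map_iSup_of_continuousAt
    (ENNReal.continuous_rpow_const.continuousAt) (ENNReal.zero_rpow_of_pos hpp.symm.one_div_pos),
    ENNReal.mul_iSup]
  exact iSup_le hg_le

lemma mul_measure_rpow_le (h : HasWeightedNormIneq μ k w p q N) (hp : 1 < p) (hq : 0 < q)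
    (hwm : Measurable w) (hw0 : ∀ z, w z ≠ 0) (hwt : ∀ z, w z ≠ ∞)
    (hS : MeasurableSet S) (hT : MeasurableSet T) (hSfin : μ S ≠ ∞) (hμST : μ S = μ T)
    (hkTS : ∀ z ∈ T, ∀ z' ∈ S, κ ≤ k z z') (hkST : ∀ z ∈ S, ∀ z' ∈ T, κ ≤ k z z') :
    κ * μ S ^ (1 / q + 1 / p.conjExponent) ≤ N := by
  have hpp := Real.HolderConjugate.conjExponent hp
  set c := 1 / q + 1 / p.conjExponent
  set W := fun U => (∫⁻ z in U, w z ^ q ∂μ) ^ (1 / q)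
  set V := fun U => (∫⁻ z in U, w z ^ (-p.conjExponent) ∂μ) ^ (1 / p.conjExponent)
  have holder : ∀ U, μ U ^ c ≤ W U * V U := fun U => by
    simpa only [Measure.restrict_apply_univ] using
      measure_univ_rpow_le_lintegral_rpow_mul_lintegral_rpow_neg (μ := μ.restrict U)
        hwm.aemeasurable hw0 hwt hpp.symm.pos hq
  have hTS : κ * W T * V S ≤ N := h.mul_setLIntegral_rpow_neg_le hp hq hwm hw0 hwt hS hSfin hT hkTS
  have hST : κ * W S * V T ≤ N :=
    h.mul_setLIntegral_rpow_neg_le hp hq hwm hw0 hwt hT (hμST ▸ hSfin) hS hkST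
  refine (ENNReal.pow_le_pow_left_iff two_ne_zero).1 ?_
  calc (κ * μ S ^ c) ^ 2 = κ * μ S ^ c * (κ * μ T ^ c) := by rw [← hμST, sq]
    _ ≤ κ * (W S * V S) * (κ * (W T * V T)) := by gcongr <;> apply holder
    _ = (κ * W T * V S) * (κ * W S * V T) := by ring
    _ ≤ N ^ 2 := sq N ▸ mul_le_mul' hTS hST

end HasWeightedNormIneq

lemma dist_mem_Icc_of_mem_ball {Y : Type*} [PseudoMetricSpace Y] {a b x y : Y} {r : ℝ}
    (hab : dist a b = 3 * r) (hx : x ∈ ball a r) (hy : y ∈ ball b r) :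
    r ≤ dist x y ∧ dist x y ≤ 5 * r := by
  rw [mem_ball] at hx hy
  constructor
  · linarith [dist_triangle4 a x y b, dist_comm a x]
  · linarith [dist_triangle4 x a b y, dist_comm y b]

lemma ofReal_rpow_mul_min_le {r t c : ℝ} (hc : 0 ≤ c) (hrt : r ≤ t) (htc : t ≤ c * r)
    (γ : ℝ) : ENNReal.ofReal r ^ γ * min 1 (ENNReal.ofReal c ^ γ) ≤ ENNReal.ofReal t ^ γ := by
  rcases le_total 0 γ with hγ | hγ
  · calc _ ≤ ENNReal.ofReal r ^ γ * 1 := by gcongr; exact min_le_left _ _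
      _ ≤ _ := by rw [mul_one]; gcongr
  · calc _ ≤ ENNReal.ofReal r ^ γ * ENNReal.ofReal c ^ γ := by gcongr; exact min_le_right _ _
      _ = (ENNReal.ofReal (c * r) ^ (-γ))⁻¹ := by
        rw [ENNReal.rpow_neg, inv_inv, ENNReal.ofReal_mul hc, mul_comm,
          ENNReal.mul_rpow_of_ne_top ofReal_ne_top ofReal_ne_top]
      _ ≤ (ENNReal.ofReal t ^ (-γ))⁻¹ := by gcongr; linarith
      _ = _ := by rw [ENNReal.rpow_neg, inv_inv]

lemma rpow_mul_le_prodKernel {m n : ℕ} {α β r r' : ℝ} {x₀ x₁ : E m} {y₀ y₁ : E n}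
    (hx : dist x₀ x₁ = 3 * r) (hy : dist y₀ y₁ = 3 * r') {z z' : E m × E n}
    (hz : z ∈ ball x₀ r ×ˢ ball y₀ r') (hz' : z' ∈ ball x₁ r ×ˢ ball y₁ r') :
    ENNReal.ofReal r ^ (α - m) * min 1 (ENNReal.ofReal 5 ^ (α - m)) *
        (ENNReal.ofReal r' ^ (β - n) * min 1 (ENNReal.ofReal 5 ^ (β - n)))
      ≤ prodKernel m n α β z z' := by
  obtain ⟨h₁, h₂⟩ := dist_mem_Icc_of_mem_ball hx hz.1 hz'.1
  obtain ⟨h₃, h₄⟩ := dist_mem_Icc_of_mem_ball hy hz.2 hz'.2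
  rw [dist_eq_norm] at h₁ h₂ h₃ h₄
  exact mul_le_mul' (ofReal_rpow_mul_min_le (by norm_num) h₁ h₂ _)
    (ofReal_rpow_mul_min_le (by norm_num) h₃ h₄ _)

lemma volume_ball_prod_ball_rpow {m n : ℕ} (x : E m) (y : E n) {r r' c : ℝ} (hr : 0 < r)
    (hr' : 0 < r') (hc : 0 ≤ c) :
    volume (ball x r ×ˢ ball y r') ^ c = ENNReal.ofReal r ^ (m * c) * ENNReal.ofReal r' ^ (n * c) *
      (volume (ball (0 : E m) 1) * volume (ball (0 : E n) 1)) ^ c := by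
  rw [Measure.volume_eq_prod, Measure.prod_prod, Measure.addHaar_ball_of_pos _ _ hr,
    Measure.addHaar_ball_of_pos _ _ hr', finrank_euclideanSpace_fin, finrank_euclideanSpace_fin,
    ENNReal.ofReal_pow hr.le, ENNReal.ofReal_pow hr'.le, ENNReal.rpow_natCast_mul,
    ENNReal.rpow_natCast_mul, ← ENNReal.mul_rpow_of_nonneg _ _ hc,
    ← ENNReal.mul_rpow_of_nonneg _ _ hc]
  ring_nf

lemma eq_zero_of_forall_mul_ofReal_rpow_le {C D : ℝ≥0∞} {s : ℝ} (hC0 : C ≠ 0) (hCt : C ≠ ∞)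
    (hD : D ≠ ∞) (h : ∀ r : ℝ, 0 < r → C * ENNReal.ofReal r ^ s ≤ D) : s = 0 := by
  by_contra hs
  have hpos : 0 < (D + 1) / C := ENNReal.div_pos (by simp) hCt
  have hfin : (D + 1) / C ≠ ∞ := ENNReal.div_ne_top (by simpa using hD) hC0
  set ρ := ((D + 1) / C) ^ (1 / s)
  have hρ := h ρ.toReal (ENNReal.toReal_pos (ENNReal.rpow_pos hpos hfin).ne'
    (ENNReal.rpow_ne_top_of_nonneg' hpos hfin))
  rw [ENNReal.ofReal_toReal (ENNReal.rpow_ne_top_of_nonneg' hpos hfin), ← ENNReal.rpow_mul,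
    one_div_mul_cancel hs, ENNReal.rpow_one, ENNReal.mul_div_cancel hC0 hCt] at hρ
  exact (ENNReal.lt_add_right hD one_ne_zero).not_ge hρ

lemma HasWeightedNormIneq.rpow_mul_volume_rpow_le {m n : ℕ} (hm : 0 < m) (hn : 0 < n)
    {α β p q : ℝ} {w : E m × E n → ℝ≥0∞} {N : ℝ≥0∞}
    (h : HasWeightedNormIneq volume (prodKernel m n α β) w p q N) (hp : 1 < p) (hq : 0 < q)
    (hwm : Measurable w) (hw0 : ∀ z, w z ≠ 0) (hwt : ∀ z, w z ≠ ∞) {r r' : ℝ} (hr : 0 < r)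
    (hr' : 0 < r') :
    ENNReal.ofReal r ^ (α - m) * min 1 (ENNReal.ofReal 5 ^ (α - m)) *
        (ENNReal.ofReal r' ^ (β - n) * min 1 (ENNReal.ofReal 5 ^ (β - n))) *
        volume (ball (0 : E m) r ×ˢ ball (0 : E n) r') ^ (1 / q + 1 / p.conjExponent) ≤ N := by
  have : Nontrivial (E m) := Module.nontrivial_of_finrank_pos (R := ℝ) (by simpa using hm)
  have : Nontrivial (E n) := Module.nontrivial_of_finrank_pos (R := ℝ) (by simpa using hn)
  obtain ⟨x, hx⟩ := exists_norm_eq (E m) (by positivity : 0 ≤ 3 * r)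
  obtain ⟨y, hy⟩ := exists_norm_eq (E n) (by positivity : 0 ≤ 3 * r')
  have hx₀ : dist 0 x = 3 * r := by rw [dist_comm, dist_zero_right, hx]
  have hy₀ : dist 0 y = 3 * r' := by rw [dist_comm, dist_zero_right, hy]
  refine h.mul_measure_rpow_le hp hq hwm hw0 hwt (measurableSet_ball.prod measurableSet_ball)
    (measurableSet_ball.prod measurableSet_ball) (T := ball x r ×ˢ ball y r')
    (isBounded_ball.prod isBounded_ball).measure_lt_top.ne ?_
    (fun z hz z' hz' => rpow_mul_le_prodKernel (dist_comm 0 x ▸ hx₀) (dist_comm 0 y ▸ hy₀) hz hz')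
    (fun z hz z' hz' => rpow_mul_le_prodKernel hx₀ hy₀ hz hz')
  simp only [Measure.volume_eq_prod, Measure.prod_prod, Measure.addHaar_ball_center _ x,
    Measure.addHaar_ball_center _ y]

lemma HasWeightedNormIneq.exists_mul_rpow_mul_rpow_le {m n : ℕ} (hm : 0 < m) (hn : 0 < n)
    {α β p q : ℝ} {w : E m × E n → ℝ≥0∞} {N : ℝ≥0∞}
    (h : HasWeightedNormIneq volume (prodKernel m n α β) w p q N) (hp : 1 < p) (hq : 0 < q)
    (hwm : Measurable w) (hw0 : ∀ z, w z ≠ 0) (hwt : ∀ z, w z ≠ ∞) :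
    ∃ C : ℝ≥0∞, C ≠ 0 ∧ C ≠ ∞ ∧ ∀ r r' : ℝ, 0 < r → 0 < r' →
      C * ENNReal.ofReal r ^ (α - m + m * (1 / q + 1 / p.conjExponent)) *
        ENNReal.ofReal r' ^ (β - n + n * (1 / q + 1 / p.conjExponent)) ≤ N := by
  set c := 1 / q + 1 / p.conjExponent
  have hc : 0 < c := by
    have := (Real.HolderConjugate.conjExponent hp).symm.one_div_pos; positivity
  set a := min 1 (ENNReal.ofReal 5 ^ (α - m))
  set b := min 1 (ENNReal.ofReal 5 ^ (β - n))
  set B := volume (ball (0 : E m) 1) * volume (ball (0 : E n) 1)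
  have hB0 : B ≠ 0 :=
    mul_ne_zero (measure_ball_pos _ _ one_pos).ne' (measure_ball_pos _ _ one_pos).ne'
  have hBt : B ≠ ∞ := ENNReal.mul_ne_top measure_ball_lt_top.ne measure_ball_lt_top.ne
  have hmin : ∀ γ : ℝ, min 1 (ENNReal.ofReal 5 ^ γ) ≠ ∞ := fun γ =>
    ((min_le_left _ _).trans_lt one_lt_top).ne
  refine ⟨a * b * B ^ c, by simp [a, b, hB0, hBt, hc],
    ENNReal.mul_ne_top (ENNReal.mul_ne_top (hmin _) (hmin _))
      (ENNReal.rpow_ne_top_of_nonneg hc.le hBt), fun r r' hr hr' => ?_⟩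
  convert h.rpow_mul_volume_rpow_le hm hn hp hq hwm hw0 hwt hr hr' using 1
  rw [volume_ball_prod_ball_rpow _ _ hr hr' hc.le,
    ENNReal.rpow_add _ _ (by simpa using hr) ofReal_ne_top,
    ENNReal.rpow_add _ _ (by simpa using hr') ofReal_ne_top]
  ring

theorem one_weight_balanced_diagonal_general (m n : ℕ) (hm : 0 < m) (hn : 0 < n)
    (α β p q : ℝ) (hp : 1 < p) (hq : 1 < q)
    (w : E m × E n → ℝ≥0∞) (hwm : Measurable w) (hw : ∀ z, 0 < w z ∧ w z < ∞)
    (N : ℝ≥0∞) (hN : N ≠ ∞)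
    (hineq : ∀ f : E m × E n → ℝ≥0∞, Measurable f →
      (∫⁻ z, (Iab m n α β f z * w z) ^ q) ^ (1 / q)
        ≤ N * (∫⁻ z, (f z * w z) ^ p) ^ (1 / p)) :
    1 / p - 1 / q = α / (m : ℝ) ∧ α / (m : ℝ) = β / (n : ℝ) := by
  have h : HasWeightedNormIneq volume (prodKernel m n α β) w p q N := hineq
  obtain ⟨C, hC0, hCt, hC⟩ := h.exists_mul_rpow_mul_rpow_le hm hn hp (by linarith) hwm
    (fun z => (hw z).1.ne') (fun z => (hw z).2.ne)
  have hα := eq_zero_of_forall_mul_ofReal_rpow_le hC0 hCt hN fun r hr => by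
    simpa only [ENNReal.ofReal_one, ENNReal.one_rpow, mul_one] using hC r 1 hr one_pos
  have hβ := eq_zero_of_forall_mul_ofReal_rpow_le hC0 hCt hN fun r' hr' => by
    simpa only [ENNReal.ofReal_one, ENNReal.one_rpow, mul_one] using hC 1 r' one_pos hr'
  have hc : 1 / q + 1 / p.conjExponent = 1 - (1 / p - 1 / q) := by
    linarith [(Real.HolderConjugate.conjExponent hp).one_div_add_one_div, one_div_one (G := ℝ)]
  rw [hc] at hα hβ
  have hαm : α / m = 1 / p - 1 / q := by rw [div_eq_iff (by positivity)]; linarith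
  have hβn : β / n = 1 / p - 1 / q := by rw [div_eq_iff (by positivity)]; linarith
  exact ⟨hαm.symm, hαm.trans hβn.symm⟩

/-- **Necessity of the balanced diagonal conditions in the one-weight case.**  If the
one-weight norm inequality `‖(I_{α,β} f) w‖_{L^q} ≤ N ‖f w‖_{L^p}` holds for all `f ≥ 0`
with a finite constant `N`, for some (everywhere positive and finite, measurable) weight `w`,
where `1 < p, q < ∞` and `α, β > 0`, then necessarily `1/p − 1/q = α/m = β/n`. -/
theorem one_weight_balanced_diagonal (m n : ℕ) (hm : 0 < m) (hn : 0 < n)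
    (α β p q : ℝ) (hα : 0 < α) (hβ : 0 < β) (hp : 1 < p) (hq : 1 < q)
    (w : E m × E n → ℝ≥0∞) (hwm : Measurable w) (hw : ∀ z, 0 < w z ∧ w z < ∞)
    (N : ℝ≥0∞) (hN : N ≠ ∞)
    (hineq : ∀ f : E m × E n → ℝ≥0∞, Measurable f →
      (∫⁻ z, (Iab m n α β f z * w z) ^ q) ^ (1 / q)
        ≤ N * (∫⁻ z, (f z * w z) ^ p) ^ (1 / p)) :
    1 / p - 1 / q = α / (m : ℝ) ∧ α / (m : ℝ) = β / (n : ℝ) :=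
  one_weight_balanced_diagonal_general m n hm hn α β p q hp hq w hwm hw N hN hineq
end
end

section
/- Let w_γ(x) = |x|^{−γ}, v_δ(x) = |x|^δ on ℝ^m with 1<p,q<∞. If the two-weight power-weight norm inequality (∫ (I_α f)^q |x|^{−γq} dx)^{1/q} ≤ N (∫ f^p |x|^{δp} dx)^{1/p} holds for all f ≥ 0 with N < ∞ and q < p, then a contradiction arises; hence p ≤ q is necessary for the power weighted norm inequality for I_α f = ∫|x−y|^{α−n}f(y)dy. -/
open MeasureTheory ENNReal

noncomputable section

/-!
Test the inequality on sums of bumps supported on the disjoint dyadic shells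
`2 ^ k ≤ ‖x‖ < 2 ^ (k + 1)`. A dilation by `r` multiplies both sides by powers of `r`, so the
heights can be chosen to make every bump contribute the same amount `R < ∞` to the right-hand
side, and the sign of `k` can be chosen so that every bump contributes at least a fixed `L > 0`
to the left-hand side. For `n` bumps, linearity of `I_α` and superadditivity of `t ↦ t ^ q`
(`q ≥ 1`) bound the left side below by `(n L) ^ (1 / q)`, while disjointness of the supports makes
the right side equal to `N (n R) ^ (1 / p)`. Since `1 / p < 1 / q`, this fails for large `n`.
-/

open Filter Topology

theorem ENNReal.sum_rpow_le_rpow_sum {ι : Type*} (s : Finset ι) (a : ι → ℝ≥0∞)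
    {p : ℝ} (hp : 1 ≤ p) : ∑ i ∈ s, a i ^ p ≤ (∑ i ∈ s, a i) ^ p := by
  classical
  induction s using Finset.induction_on with
  | empty => simp [ENNReal.zero_rpow_of_pos (by linarith : (0 : ℝ) < p)]
  | insert i s hi ih =>
    rw [Finset.sum_insert hi, Finset.sum_insert hi]
    calc a i ^ p + ∑ j ∈ s, a j ^ p ≤ a i ^ p + (∑ j ∈ s, a j) ^ p := by gcongr
      _ ≤ _ := ENNReal.add_rpow_le_rpow_add _ _ hp

theorem ENNReal.rpow_sum_of_pairwise_eq_zero {ι : Type*} {s : Finset ι} {a : ι → ℝ≥0∞}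
    {p : ℝ} (hp : 0 < p) (h : (s : Set ι).Pairwise fun i j => a i = 0 ∨ a j = 0) :
    (∑ i ∈ s, a i) ^ p = ∑ i ∈ s, a i ^ p := by
  by_cases hex : ∃ i ∈ s, a i ≠ 0
  · obtain ⟨i, hi, hai⟩ := hex
    have hzero : ∀ j ∈ s, j ≠ i → a j = 0 := fun j hj hji => (h hj hi hji).resolve_right hai
    rw [Finset.sum_eq_single_of_mem i hi hzero, Finset.sum_eq_single_of_mem i hi
      fun j hj hji => by rw [hzero j hj hji, ENNReal.zero_rpow_of_pos hp]]
  · push Not at hex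
    rw [Finset.sum_eq_zero hex, Finset.sum_eq_zero fun i hi => by
      rw [hex i hi, ENNReal.zero_rpow_of_pos hp], ENNReal.zero_rpow_of_pos hp]

theorem ENNReal.exists_natCast_rpow_mul_lt {a b : ℝ} (hab : b < a) {P C : ℝ≥0∞} (hP : P ≠ 0)
    (hC : C ≠ ∞) : ∃ n : ℕ, (n : ℝ≥0∞) ^ b * C < (n : ℝ≥0∞) ^ a * P := by
  have hpow : Tendsto (fun n : ℕ => (n : ℝ≥0∞) ^ (a - b)) atTop (𝓝 ∞) := by
    have := ((ENNReal.continuous_rpow_const (y := a - b)).tendsto ∞).comp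
      ENNReal.tendsto_nat_nhds_top
    rwa [ENNReal.top_rpow_of_pos (sub_pos.mpr hab)] at this
  have hlim := ENNReal.Tendsto.mul_const hpow (Or.inl top_ne_zero) (b := P)
  rw [ENNReal.top_mul hP] at hlim
  obtain ⟨n, hCn, hn⟩ :=
    ((hlim.eventually (lt_mem_nhds hC.lt_top)).and (eventually_ge_atTop 1)).exists
  have hn0 : (n : ℝ≥0∞) ≠ 0 := by exact_mod_cast (Nat.one_le_iff_ne_zero.mp hn)
  refine ⟨n, ?_⟩
  calc (n : ℝ≥0∞) ^ b * C < (n : ℝ≥0∞) ^ b * ((n : ℝ≥0∞) ^ (a - b) * P) :=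
        ENNReal.mul_lt_mul_right
          (ENNReal.rpow_pos (pos_iff_ne_zero.mpr hn0) (natCast_ne_top n)).ne'
          (ENNReal.rpow_ne_top_of_ne_zero hn0 (natCast_ne_top n)) hCn
    _ = (n : ℝ≥0∞) ^ a * P := by
        rw [← mul_assoc, ← ENNReal.rpow_add _ _ hn0 (natCast_ne_top n), add_sub_cancel]

theorem ofReal_rpow_mul_ofReal_rpow {r : ℝ} (hr : 0 < r) (a b : ℝ) :
    ENNReal.ofReal (r ^ a) * ENNReal.ofReal (r ^ b) = ENNReal.ofReal (r ^ (a + b)) := by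
  rw [← ENNReal.ofReal_mul (by positivity), Real.rpow_add hr]

theorem ofReal_norm_smul_rpow {F : Type*} [NormedAddCommGroup F] [NormedSpace ℝ F] {r : ℝ}
    (hr : 0 < r) (x : F) (e : ℝ) :
    ENNReal.ofReal ‖r • x‖ ^ e = ENNReal.ofReal (r ^ e) * ENNReal.ofReal ‖x‖ ^ e := by
  rw [norm_smul, Real.norm_of_nonneg hr.le, ENNReal.ofReal_mul hr.le,
    ENNReal.mul_rpow_of_ne_top ofReal_ne_top ofReal_ne_top, ENNReal.ofReal_rpow_of_pos hr]

theorem lintegral_eq_mul_lintegral_comp_smul {F : Type*} [NormedAddCommGroup F]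
    [NormedSpace ℝ F] [MeasurableSpace F] [BorelSpace F] [FiniteDimensional ℝ F] (μ : Measure F)
    [μ.IsAddHaarMeasure] (f : F → ℝ≥0∞) {r : ℝ} (hr : 0 < r) :
    ∫⁻ x, f x ∂μ = ENNReal.ofReal (r ^ Module.finrank ℝ F) * ∫⁻ x, f (r • x) ∂μ := by
  have h := lintegral_map_equiv f (MeasurableEquiv.smul₀ r hr.ne') (μ := μ)
  change ∫⁻ x, f x ∂(Measure.map (r • ·) μ) = ∫⁻ x, f (r • x) ∂μ at h
  rw [← h, Measure.map_addHaar_smul μ hr.ne', lintegral_smul_measure,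
    abs_of_pos (by positivity), smul_eq_mul, ← mul_assoc,
    ← ENNReal.ofReal_mul (by positivity), mul_inv_cancel₀ (by positivity), ENNReal.ofReal_one,
    one_mul]

theorem lintegral_pos_of_forall_mem_pos {α : Type*} [MeasurableSpace α] {μ : Measure α}
    {f : α → ℝ≥0∞} (hf : Measurable f) {S : Set α} (hS : 0 < μ S) (hpos : ∀ x ∈ S, 0 < f x) :
    0 < ∫⁻ x, f x ∂μ :=
  (lintegral_pos_iff_support hf).mpr <| hS.trans_le <| measure_mono fun x hx => (hpos x hx).ne'

theorem exists_finset_int_card_eq_forall_nonneg_mul (D : ℝ) (n : ℕ) :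
    ∃ K : Finset ℤ, K.card = n ∧ ∀ k ∈ K, 0 ≤ (k : ℝ) * D := by
  rcases le_total 0 D with hD | hD
  · refine ⟨Finset.Ico 0 n, by simp, fun k hk => mul_nonneg ?_ hD⟩
    exact_mod_cast (Finset.mem_Ico.mp hk).1
  · refine ⟨Finset.Ioc (-n) 0, by simp, fun k hk => mul_nonneg_of_nonpos_of_nonpos ?_ hD⟩
    exact_mod_cast (Finset.mem_Ioc.mp hk).2

def rieszPotential (m : ℕ) (α : ℝ) (f : E m → ℝ≥0∞) (x : E m) : ℝ≥0∞ :=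
  ∫⁻ y, ENNReal.ofReal ‖x - y‖ ^ (α - m) * f y

def powerWeightedLIntegral (m : ℕ) (δ p : ℝ) (f : E m → ℝ≥0∞) : ℝ≥0∞ :=
  ∫⁻ x, (f x * ENNReal.ofReal ‖x‖ ^ δ) ^ p

theorem rieszPotential_comp_inv_smul {m : ℕ} (α : ℝ) (f : E m → ℝ≥0∞) {r : ℝ}
    (hr : 0 < r) (x : E m) :
    rieszPotential m α (fun y => f (r⁻¹ • y)) x
      = ENNReal.ofReal (r ^ α) * rieszPotential m α f (r⁻¹ • x) := by
  have hx : ∀ y : E m, x - r • y = r • (r⁻¹ • x - y) := fun y => by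
    rw [smul_sub, smul_inv_smul₀ hr.ne']
  unfold rieszPotential
  rw [lintegral_eq_mul_lintegral_comp_smul volume _ hr, finrank_euclideanSpace_fin]
  simp only [hx, inv_smul_smul₀ hr.ne', ofReal_norm_smul_rpow hr, mul_assoc]
  rw [lintegral_const_mul' _ _ ofReal_ne_top, ← mul_assoc, ← Real.rpow_natCast,
    ofReal_rpow_mul_ofReal_rpow hr, add_sub_cancel]

theorem powerWeightedLIntegral_comp_inv_smul {m : ℕ} (δ : ℝ) {p : ℝ} (hp : 0 ≤ p)
    (f : E m → ℝ≥0∞) {r : ℝ} (hr : 0 < r) :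
    powerWeightedLIntegral m δ p (fun x => f (r⁻¹ • x))
      = ENNReal.ofReal (r ^ (δ * p + m)) * powerWeightedLIntegral m δ p f := by
  unfold powerWeightedLIntegral
  rw [lintegral_eq_mul_lintegral_comp_smul volume _ hr, finrank_euclideanSpace_fin]
  simp only [inv_smul_smul₀ hr.ne', ofReal_norm_smul_rpow hr, mul_left_comm (f _),
    ENNReal.mul_rpow_of_nonneg _ _ hp, ENNReal.ofReal_rpow_of_pos (Real.rpow_pos_of_pos hr δ),
    ← Real.rpow_mul hr.le]
  rw [lintegral_const_mul' _ _ ofReal_ne_top, ← mul_assoc, ← Real.rpow_natCast,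
    ofReal_rpow_mul_ofReal_rpow hr, add_comm (m : ℝ)]

theorem powerWeightedLIntegral_const_mul {m : ℕ} (δ : ℝ) {p : ℝ} (hp : 0 ≤ p)
    {c : ℝ≥0∞} (hc : c ≠ ∞) (f : E m → ℝ≥0∞) :
    powerWeightedLIntegral m δ p (fun x => c * f x) = c ^ p * powerWeightedLIntegral m δ p f := by
  unfold powerWeightedLIntegral
  simp only [mul_assoc, ENNReal.mul_rpow_of_nonneg _ _ hp]
  exact lintegral_const_mul' _ _ (ENNReal.rpow_ne_top_of_nonneg hp hc)

theorem rieszPotential_const_mul {m : ℕ} (α : ℝ) {c : ℝ≥0∞} (hc : c ≠ ∞)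
    (f : E m → ℝ≥0∞) (x : E m) :
    rieszPotential m α (fun y => c * f y) x = c * rieszPotential m α f x := by
  unfold rieszPotential
  simp only [mul_left_comm _ c]
  exact lintegral_const_mul' _ _ hc

theorem measurable_rieszPotential {m : ℕ} (α : ℝ) {f : E m → ℝ≥0∞} (hf : Measurable f) :
    Measurable (rieszPotential m α f) := by
  unfold rieszPotential
  exact Measurable.lintegral_prod_right' <| (ENNReal.continuous_rpow_const.comp
    (ENNReal.continuous_ofReal.comp (continuous_fst.sub continuous_snd).norm)).measurable.mul
    (hf.comp measurable_snd)

theorem rieszPotential_sum {m : ℕ} {ι : Type*} (α : ℝ) (s : Finset ι)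
    {f : ι → E m → ℝ≥0∞} (hf : ∀ i ∈ s, Measurable (f i)) (x : E m) :
    rieszPotential m α (fun y => ∑ i ∈ s, f i y) x = ∑ i ∈ s, rieszPotential m α (f i) x := by
  unfold rieszPotential
  simp only [Finset.mul_sum]
  exact lintegral_finsetSum _ fun i hi => by have := hf i hi; fun_prop

theorem sum_powerWeightedLIntegral_le {m : ℕ} {ι : Type*} (δ : ℝ) {p : ℝ} (hp : 1 ≤ p)
    (s : Finset ι) {f : ι → E m → ℝ≥0∞} (hf : ∀ i ∈ s, Measurable (f i)) :
    ∑ i ∈ s, powerWeightedLIntegral m δ p (f i)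
      ≤ powerWeightedLIntegral m δ p (fun x => ∑ i ∈ s, f i x) := by
  unfold powerWeightedLIntegral
  rw [← lintegral_finsetSum _ fun i hi => by have := hf i hi; fun_prop]
  refine lintegral_mono fun x => ?_
  rw [Finset.sum_mul]
  exact ENNReal.sum_rpow_le_rpow_sum _ _ hp

theorem powerWeightedLIntegral_sum_of_pairwiseDisjoint {m : ℕ} {ι : Type*} (δ : ℝ)
    {p : ℝ} (hp : 0 < p) (s : Finset ι) {f : ι → E m → ℝ≥0∞}
    (hf : ∀ i ∈ s, Measurable (f i))
    (hdisj : (s : Set ι).PairwiseDisjoint fun i => Function.support (f i)) :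
    powerWeightedLIntegral m δ p (fun x => ∑ i ∈ s, f i x)
      = ∑ i ∈ s, powerWeightedLIntegral m δ p (f i) := by
  unfold powerWeightedLIntegral
  rw [← lintegral_finsetSum _ fun i hi => by have := hf i hi; fun_prop]
  refine lintegral_congr fun x => ?_
  rw [Finset.sum_mul]
  refine ENNReal.rpow_sum_of_pairwise_eq_zero hp fun i hi j hj hij => ?_
  by_contra! h
  exact Set.disjoint_left.mp (hdisj hi hj hij) (left_ne_zero_of_mul h.1)
    (left_ne_zero_of_mul h.2)

theorem powerWeightedLIntegral_rescale {m : ℕ} (δ : ℝ) {p : ℝ} (hp : 0 ≤ p) (s : ℝ)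
    {r : ℝ} (hr : 0 < r) (f : E m → ℝ≥0∞) :
    powerWeightedLIntegral m δ p (fun x => ENNReal.ofReal (r ^ s) * f (r⁻¹ • x))
      = ENNReal.ofReal (r ^ ((s + δ) * p + m)) * powerWeightedLIntegral m δ p f := by
  rw [powerWeightedLIntegral_const_mul δ hp ofReal_ne_top,
    powerWeightedLIntegral_comp_inv_smul δ hp f hr, ← mul_assoc,
    ENNReal.ofReal_rpow_of_pos (Real.rpow_pos_of_pos hr s), ← Real.rpow_mul hr.le,
    ofReal_rpow_mul_ofReal_rpow hr]
  ring_nf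

theorem rieszPotential_rescale {m : ℕ} (α s : ℝ) {r : ℝ} (hr : 0 < r) (f : E m → ℝ≥0∞)
    (x : E m) :
    rieszPotential m α (fun y => ENNReal.ofReal (r ^ s) * f (r⁻¹ • y)) x
      = ENNReal.ofReal (r ^ (s + α)) * rieszPotential m α f (r⁻¹ • x) := by
  rw [rieszPotential_const_mul α ofReal_ne_top, rieszPotential_comp_inv_smul α f hr,
    ← mul_assoc, ofReal_rpow_mul_ofReal_rpow hr]

def unitShell (m : ℕ) : Set (E m) := {x | 1 ≤ ‖x‖ ∧ ‖x‖ < 2}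

theorem measurableSet_unitShell (m : ℕ) : MeasurableSet (unitShell m) :=
  (measurableSet_le measurable_const measurable_norm).inter
    (measurableSet_lt measurable_norm measurable_const)

theorem volume_unitShell_pos {m : ℕ} (hm : 0 < m) : 0 < volume (unitShell m) := by
  have : NeZero m := ⟨hm.ne'⟩
  obtain ⟨x, hx⟩ := exists_norm_eq (E m) (by norm_num : (0 : ℝ) ≤ 3 / 2)
  have hopen : IsOpen {x : E m | 1 < ‖x‖ ∧ ‖x‖ < 2} :=
    (isOpen_lt continuous_const continuous_norm).inter
      (isOpen_lt continuous_norm continuous_const)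
  refine (hopen.measure_pos volume ⟨x, by norm_num [hx]⟩).trans_le (measure_mono ?_)
  exact fun y hy => ⟨hy.1.le, hy.2⟩

theorem volume_unitShell_lt_top (m : ℕ) : volume (unitShell m) < ∞ :=
  (measure_mono fun _ hx => mem_ball_zero_iff.mpr hx.2 : volume (unitShell m) ≤ _).trans_lt
    measure_ball_lt_top

theorem measurable_indicator_unitShell (m : ℕ) :
    Measurable ((unitShell m).indicator (1 : E m → ℝ≥0∞)) :=
  measurable_const.indicator (measurableSet_unitShell m)

def shellBump (m : ℕ) (s r : ℝ) (x : E m) : ℝ≥0∞ :=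
  ENNReal.ofReal (r ^ s) * (unitShell m).indicator 1 (r⁻¹ • x)

theorem measurable_shellBump (m : ℕ) (s r : ℝ) : Measurable (shellBump m s r) :=
  measurable_const.mul <| (measurable_indicator_unitShell m).comp (measurable_const_smul _)

theorem support_shellBump_subset {m : ℕ} (s : ℝ) {r : ℝ} (hr : 0 < r) :
    Function.support (shellBump m s r) ⊆ {x | r ≤ ‖x‖ ∧ ‖x‖ < 2 * r} := by
  intro x hx
  have hx : r⁻¹ • x ∈ unitShell m := by
    by_contra h
    simp [shellBump, Set.indicator_of_notMem h] at hx
  rw [unitShell, Set.mem_ofPred_eq, norm_smul, Real.norm_of_nonneg (inv_nonneg.mpr hr.le),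
    inv_mul_eq_div, le_div_iff₀ hr, div_lt_iff₀ hr, one_mul] at hx
  exact hx

theorem pairwise_disjoint_support_shellBump_zpow (m : ℕ) (s : ℝ) :
    Pairwise (Function.onFun Disjoint fun k : ℤ => Function.support (shellBump m s (2 ^ k))) := by
  refine (pairwise_disjoint_on _).mpr fun j k hjk => Set.disjoint_left.mpr fun x hxj hxk => ?_
  have hj := support_shellBump_subset s (by positivity) hxj
  have hk := support_shellBump_subset s (by positivity) hxk
  have : (2 : ℝ) * 2 ^ j ≤ 2 ^ k := by
    rw [← zpow_one_add₀ two_ne_zero, add_comm]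
    exact zpow_le_zpow_right₀ one_le_two hjk
  linarith [hj.2, hk.1]

theorem rieszPotential_indicator_unitShell_pos {m : ℕ} (hm : 0 < m) (α : ℝ) (x : E m) :
    0 < rieszPotential m α ((unitShell m).indicator 1) x := by
  have : NeZero m := ⟨hm.ne'⟩
  have := measurable_indicator_unitShell m
  refine lintegral_pos_of_forall_mem_pos (by fun_prop) (S := unitShell m \ {x}) ?_ ?_
  · rw [measure_sdiff_null (measure_singleton x)]
    exact volume_unitShell_pos hm
  · rintro y ⟨hy, hyx⟩
    rw [Set.indicator_of_mem hy, Pi.one_apply, mul_one]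
    exact ENNReal.rpow_pos (ENNReal.ofReal_pos.mpr (norm_sub_pos_iff.mpr (Ne.symm hyx)))
      ofReal_ne_top

theorem powerWeightedLIntegral_rieszPotential_indicator_unitShell_pos {m : ℕ} (hm : 0 < m)
    (α γ : ℝ) {q : ℝ} (hq : 0 ≤ q) :
    0 < powerWeightedLIntegral m γ q (rieszPotential m α ((unitShell m).indicator 1)) := by
  have := measurable_rieszPotential α (measurable_indicator_unitShell m)
  refine lintegral_pos_of_forall_mem_pos (by fun_prop) (volume_unitShell_pos hm) fun x hx => ?_
  have hx0 : 0 < ‖x‖ := one_pos.trans_le hx.1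
  exact ENNReal.rpow_pos_of_nonneg
    (ENNReal.mul_pos (rieszPotential_indicator_unitShell_pos hm α x).ne'
      (ENNReal.rpow_pos (ENNReal.ofReal_pos.mpr hx0) ofReal_ne_top).ne') hq

theorem powerWeightedLIntegral_indicator_unitShell_lt_top (m : ℕ) (δ : ℝ) {p : ℝ}
    (hp : 0 < p) :
    powerWeightedLIntegral m δ p ((unitShell m).indicator 1) < ∞ := by
  have hbound : ∀ x, ((unitShell m).indicator 1 x * ENNReal.ofReal ‖x‖ ^ δ) ^ p
      ≤ (unitShell m).indicator (fun _ => ((2 : ℝ≥0∞) ^ |δ|) ^ p) x := by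
    intro x
    by_cases hx : x ∈ unitShell m
    · rw [Set.indicator_of_mem hx, Set.indicator_of_mem hx, Pi.one_apply, one_mul]
      gcongr
      calc ENNReal.ofReal ‖x‖ ^ δ ≤ ENNReal.ofReal ‖x‖ ^ |δ| :=
            ENNReal.rpow_le_rpow_of_exponent_le (ENNReal.one_le_ofReal.mpr hx.1) (le_abs_self δ)
        _ ≤ 2 ^ |δ| := by
            gcongr
            exact (ENNReal.ofReal_le_ofReal hx.2.le).trans_eq (ENNReal.ofReal_ofNat 2)
    · rw [Set.indicator_of_notMem hx, Set.indicator_of_notMem hx, zero_mul,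
        ENNReal.zero_rpow_of_pos hp]
  calc powerWeightedLIntegral m δ p ((unitShell m).indicator 1)
      ≤ ∫⁻ x, (unitShell m).indicator (fun _ => ((2 : ℝ≥0∞) ^ |δ|) ^ p) x :=
        lintegral_mono hbound
    _ = ((2 : ℝ≥0∞) ^ |δ|) ^ p * volume (unitShell m) :=
        lintegral_indicator_const (measurableSet_unitShell m) _
    _ < ∞ := ENNReal.mul_lt_top (by finiteness) (volume_unitShell_lt_top m)

def dyadicShellSum (m : ℕ) (s : ℝ) (K : Finset ℤ) : E m → ℝ≥0∞ :=
  fun x => ∑ k ∈ K, shellBump m s (2 ^ k) x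

theorem measurable_dyadicShellSum (m : ℕ) (s : ℝ) (K : Finset ℤ) :
    Measurable (dyadicShellSum m s K) :=
  Finset.measurable_sum K fun _ _ => measurable_shellBump m s _

theorem powerWeightedLIntegral_dyadicShellSum {m : ℕ} (δ : ℝ) {p : ℝ} (hp : 0 < p) (s : ℝ)
    (K : Finset ℤ) :
    powerWeightedLIntegral m δ p (dyadicShellSum m s K)
      = ∑ k ∈ K, ENNReal.ofReal ((2 ^ k : ℝ) ^ ((s + δ) * p + m))
          * powerWeightedLIntegral m δ p ((unitShell m).indicator 1) := by
  unfold dyadicShellSum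
  rw [powerWeightedLIntegral_sum_of_pairwiseDisjoint δ hp K
    (fun k _ => measurable_shellBump m s _)
    ((pairwise_disjoint_support_shellBump_zpow m s).set_pairwise K)]
  exact Finset.sum_congr rfl fun _ _ => powerWeightedLIntegral_rescale δ hp.le s (by positivity) _

theorem sum_le_powerWeightedLIntegral_rieszPotential_dyadicShellSum {m : ℕ} (α δ : ℝ)
    {q : ℝ} (hq : 1 ≤ q) (s : ℝ) (K : Finset ℤ) :
    ∑ k ∈ K, ENNReal.ofReal ((2 ^ k : ℝ) ^ ((s + α + δ) * q + m))
        * powerWeightedLIntegral m δ q (rieszPotential m α ((unitShell m).indicator 1))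
      ≤ powerWeightedLIntegral m δ q (rieszPotential m α (dyadicShellSum m s K)) := by
  have hT : rieszPotential m α (dyadicShellSum m s K) = fun x => ∑ k ∈ K,
      ENNReal.ofReal ((2 ^ k : ℝ) ^ (s + α))
        * rieszPotential m α ((unitShell m).indicator 1) ((2 ^ k : ℝ)⁻¹ • x) := by
    funext x
    unfold dyadicShellSum
    rw [rieszPotential_sum α K (fun _ _ => measurable_shellBump m s _)]
    exact Finset.sum_congr rfl fun _ _ => rieszPotential_rescale α s (by positivity) _ x
  rw [hT]
  refine le_trans (le_of_eq (Finset.sum_congr rfl fun _ _ => ?_))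
    (sum_powerWeightedLIntegral_le δ hq K fun _ _ => ?_)
  · exact (powerWeightedLIntegral_rescale δ (zero_le_one.trans hq) (s + α) (by positivity)
      _).symm
  · exact measurable_const.mul <|
      (measurable_rieszPotential α (measurable_indicator_unitShell m)).comp
        (measurable_const_smul _)

theorem powerWeightedLIntegral_dyadicShellSum_of_balanced {m : ℕ} (δ : ℝ) {p : ℝ}
    (hp : 0 < p) (K : Finset ℤ) :
    powerWeightedLIntegral m δ p (dyadicShellSum m (-(δ + m / p)) K)
      = K.card * powerWeightedLIntegral m δ p ((unitShell m).indicator 1) := by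
  have h0 : (-(δ + m / p) + δ) * p + m = 0 := by field_simp; ring
  simp only [powerWeightedLIntegral_dyadicShellSum δ hp, h0, Real.rpow_zero, ENNReal.ofReal_one,
    one_mul, Finset.sum_const, nsmul_eq_mul]

theorem card_mul_le_powerWeightedLIntegral_rieszPotential_dyadicShellSum {m : ℕ} (α γ δ : ℝ)
    {p q : ℝ} (hq : 1 ≤ q) {K : Finset ℤ}
    (hK : ∀ k ∈ K, 0 ≤ (k : ℝ) * (α + γ + m / q - (δ + m / p))) :
    K.card * powerWeightedLIntegral m γ q (rieszPotential m α ((unitShell m).indicator 1))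
      ≤ powerWeightedLIntegral m γ q
          (rieszPotential m α (dyadicShellSum m (-(δ + m / p)) K)) := by
  refine le_trans ?_ (sum_le_powerWeightedLIntegral_rieszPotential_dyadicShellSum α γ hq _ K)
  rw [← nsmul_eq_mul, ← Finset.sum_const]
  refine Finset.sum_le_sum fun k hk => le_mul_of_one_le_left zero_le ?_
  have he : (-(δ + m / p) + α + γ) * q + m = q * (α + γ + m / q - (δ + m / p)) := by
    field_simp; ring
  rw [he, ← Real.rpow_intCast, ← Real.rpow_mul zero_le_two, ENNReal.one_le_ofReal]
  exact Real.one_le_rpow one_le_two (by nlinarith [hK k hk])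

/-- **Necessity of `p ≤ q` in the Stein–Weiss power weight inequality.**  Let
`w_γ(x) = |x|^{−γ}`, `v_δ(x) = |x|^{δ}` on `ℝ^m`, `1 < p, q < ∞`.  If the two-weight
power-weight norm inequality
`(∫ (I_α f)^q |x|^{−γq} dx)^{1/q} ≤ N (∫ f^p |x|^{δp} dx)^{1/p}` holds for all `f ≥ 0` with a
finite constant `N`, and `q < p`, then a contradiction arises. -/
theorem stein_weiss_p_le_q_necessary (m : ℕ) (hm : 0 < m) (p q α γ δ : ℝ)
    (hp : 1 < p) (hq : 1 < q)
    (N : ℝ≥0∞) (hN : N ≠ ∞)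
    (hineq : ∀ f : E m → ℝ≥0∞, Measurable f →
      (∫⁻ x, ((∫⁻ y, (ENNReal.ofReal ‖x - y‖) ^ (α - (m : ℝ)) * f y) *
            (ENNReal.ofReal ‖x‖) ^ (-γ)) ^ q) ^ (1 / q)
        ≤ N * (∫⁻ x, (f x * (ENNReal.ofReal ‖x‖) ^ δ) ^ p) ^ (1 / p))
    (hqp : q < p) : False := by
  have hp0 : 0 < p := one_pos.trans hp
  have hq0 : 0 < q := one_pos.trans hq
  set L := powerWeightedLIntegral m (-γ) q (rieszPotential m α ((unitShell m).indicator 1))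
  set R := powerWeightedLIntegral m δ p ((unitShell m).indicator 1)
  have htest : ∀ n : ℕ, (n * L) ^ (1 / q) ≤ N * (n * R) ^ (1 / p) := by
    intro n
    obtain ⟨K, rfl, hK⟩ :=
      exists_finset_int_card_eq_forall_nonneg_mul (α + -γ + m / q - (δ + m / p)) n
    calc (K.card * L) ^ (1 / q)
        ≤ powerWeightedLIntegral m (-γ) q
            (rieszPotential m α (dyadicShellSum m (-(δ + m / p)) K)) ^ (1 / q) := by
          gcongr
          exact card_mul_le_powerWeightedLIntegral_rieszPotential_dyadicShellSum α (-γ) δ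
            hq.le hK
      _ ≤ N * powerWeightedLIntegral m δ p (dyadicShellSum m (-(δ + m / p)) K) ^ (1 / p) :=
          hineq _ (measurable_dyadicShellSum m _ K)
      _ = N * (K.card * R) ^ (1 / p) := by
          rw [powerWeightedLIntegral_dyadicShellSum_of_balanced δ hp0]
  have hLq : L ^ (1 / q) ≠ 0 := (ENNReal.rpow_pos_of_nonneg
    (powerWeightedLIntegral_rieszPotential_indicator_unitShell_pos hm α (-γ) hq0.le)
    (by positivity)).ne'
  have hNRp : N * R ^ (1 / p) ≠ ∞ := ENNReal.mul_ne_top hN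
    (ENNReal.rpow_ne_top_of_nonneg (by positivity)
      (powerWeightedLIntegral_indicator_unitShell_lt_top m δ hp0).ne)
  obtain ⟨n, hn⟩ := ENNReal.exists_natCast_rpow_mul_lt (one_div_lt_one_div_of_lt hq0 hqp)
    hLq hNRp
  refine hn.not_ge ?_
  have := htest n
  rwa [ENNReal.mul_rpow_of_nonneg _ _ (by positivity),
    ENNReal.mul_rpow_of_nonneg _ _ (by positivity), mul_left_comm] at this

end
end
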